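/- The metric space M₃ does not have the long trapezoid property (LTP). In fact, for every ε with 0 < ε < 1/3 and all u, v ∈ M₃ with u ≠ v, there exist x, y ∈ {a₁, a₂, a₃} with x ≠ y such that (1−ε)(d(u,v) + d(x,y)) > d(x,u) + d(y,v). -/
import Mathlib


/-- Build a metric space from a distance function which vanishes on the diagonal and takes
values in `[1,2]` off the diagonal (the triangle inequality is then automatic). -/
noncomputable def MetricSpace.ofOneTwo {α : Type*} (D : α → α → ℝ)
    (hself : ∀ x, D x x = 0) (hsymm : ∀ x y, D x y = D y x)
    (hlow : ∀ x y, x ≠ y → 1 ≤ D x y) (hhigh : ∀ x y, D x y ≤ 2) : MetricSpace α :=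
  { dist := D
    dist_self := hself
    dist_comm := hsymm
    dist_triangle := by
      intro x y z
      show D x z ≤ D x y + D y z
      rcases eq_or_ne x y with rfl | hxy
      · simp [hself]
      rcases eq_or_ne y z with rfl | hyz
      · simp [hself]
      have h1 := hlow x y hxy
      have h2 := hlow y z hyz
      have h3 := hhigh x z
      linarith
    eq_of_dist_eq_zero := by
      intro x y hxy
      replace hxy : D x y = 0 := hxy
      by_contra h
      have := hlow x y h
      linarith }

/-- The points of the metric space `M₃`: `a i` for `i : Fin 3` and `u i m, v i m` for
`i : Fin 3`, `m : ℕ`. -/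
inductive M3 where
  | a : Fin 3 → M3
  | u : Fin 3 → ℕ → M3
  | v : Fin 3 → ℕ → M3
deriving DecidableEq

namespace M3

/-- One-sided description of the pairs of points of `M₃` at distance `1`:
`d(aᵢ, uʲₘ) = d(aᵢ, vʲₘ) = 1` for `i ≠ j`, and `d(uʲₘ, vʲₘ) = 1`. -/
def one : M3 → M3 → Prop
  | .a i, .u j _ => i ≠ j
  | .a i, .v j _ => i ≠ j
  | .u j m, .v i l => j = i ∧ m = l
  | _, _ => False

/-- The distance on `M₃`: `0` on the diagonal, `1` on the pairs described by `M3.one`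
(in either order), and `2` otherwise. -/
noncomputable def D (p q : M3) : ℝ :=
  open scoped Classical in
  if p = q then 0 else if one p q ∨ one q p then 1 else 2

noncomputable instance : MetricSpace M3 :=
  MetricSpace.ofOneTwo D
    (fun x => by simp [D])
    (fun x y => by
      rcases eq_or_ne x y with rfl | h
      · rfl
      · rw [D, D, if_neg h, if_neg (Ne.symm h)]
        rcases em (one x y ∨ one y x) with h2 | h2
        · rw [if_pos h2, if_pos h2.symm]
        · rw [if_neg h2, if_neg fun hc => h2 hc.symm])
    (fun x y h => by rw [D, if_neg h]; split_ifs <;> norm_num)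
    (fun x y => by rw [D]; split_ifs <;> norm_num)

end M3

/-- A metric space `M` has the *long trapezoid property* (LTP). -/
def LTP (M : Type*) [MetricSpace M] : Prop :=
  ∀ ε : ℝ, 0 < ε → ∀ N : Set M, N.Finite → ∃ u v : M, u ≠ v ∧
    ∀ x ∈ N, ∀ y ∈ N,
      (1 - ε) * (dist x y + dist u v) ≤ dist x u + dist y v

namespace M3

lemma dist_def (p q : M3) : dist p q = M3.D p q := rfl

lemma dist_a_a {i j : Fin 3} (h : i ≠ j) : dist (M3.a i) (M3.a j) = 2 := by
  rw [dist_def, M3.D, if_neg (by simp [h]), if_neg (by simp [M3.one])]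

lemma dist_a_u {i j : Fin 3} (m : ℕ) (h : i ≠ j) : dist (M3.a i) (M3.u j m) = 1 := by
  have h1 : M3.one (.a i) (.u j m) := h
  rw [dist_def, M3.D, if_neg (by simp), if_pos (Or.inl h1)]

lemma dist_a_v {i j : Fin 3} (m : ℕ) (h : i ≠ j) : dist (M3.a i) (M3.v j m) = 1 := by
  have h1 : M3.one (.a i) (.v j m) := h
  rw [dist_def, M3.D, if_neg (by simp), if_pos (Or.inl h1)]

lemma one_le_dist {p q : M3} (h : p ≠ q) : 1 ≤ dist p q := by
  rw [dist_def, M3.D, if_neg h]; split_ifs <;> norm_num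

lemma fin3_one (p q : Fin 3) : ∃ c : Fin 3, c ≠ p ∧ c ≠ q := by revert p q; decide

lemma fin3_two (p q : Fin 3) : ∃ i j : Fin 3, i ≠ j ∧ i ≠ p ∧ j ≠ q := by revert p q; decide

lemma key (u v : M3) (h : u ≠ v) :
    ∃ i j : Fin 3, i ≠ j ∧ dist (M3.a i) u ≤ 1 ∧ dist (M3.a j) v ≤ 1 := by
  cases u with
  | a k =>
    cases v with
    | a l =>
      exact ⟨k, l, fun hc => h (by rw [hc]), by simp, by simp⟩
    | u j m =>
      obtain ⟨c, hc1, hc2⟩ := fin3_one j k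
      exact ⟨k, c, fun hc => hc2 hc.symm, by simp, le_of_eq (dist_a_u m hc1)⟩
    | v j m =>
      obtain ⟨c, hc1, hc2⟩ := fin3_one j k
      exact ⟨k, c, fun hc => hc2 hc.symm, by simp, le_of_eq (dist_a_v m hc1)⟩
  | u j1 m =>
    cases v with
    | a l =>
      obtain ⟨c, hc1, hc2⟩ := fin3_one j1 l
      exact ⟨c, l, hc2, le_of_eq (dist_a_u m hc1), by simp⟩
    | u j2 l =>
      obtain ⟨i, j, hij, hi, hj⟩ := fin3_two j1 j2
      exact ⟨i, j, hij, le_of_eq (dist_a_u m hi), le_of_eq (dist_a_u l hj)⟩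
    | v j2 l =>
      obtain ⟨i, j, hij, hi, hj⟩ := fin3_two j1 j2
      exact ⟨i, j, hij, le_of_eq (dist_a_u m hi), le_of_eq (dist_a_v l hj)⟩
  | v j1 m =>
    cases v with
    | a l =>
      obtain ⟨c, hc1, hc2⟩ := fin3_one j1 l
      exact ⟨c, l, hc2, le_of_eq (dist_a_v m hc1), by simp⟩
    | u j2 l =>
      obtain ⟨i, j, hij, hi, hj⟩ := fin3_two j1 j2
      exact ⟨i, j, hij, le_of_eq (dist_a_v m hi), le_of_eq (dist_a_u l hj)⟩
    | v j2 l =>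
      obtain ⟨i, j, hij, hi, hj⟩ := fin3_two j1 j2
      exact ⟨i, j, hij, le_of_eq (dist_a_v m hi), le_of_eq (dist_a_v l hj)⟩

lemma mem_A (i : Fin 3) : M3.a i ∈ ({M3.a 0, M3.a 1, M3.a 2} : Set M3) := by
  fin_cases i <;> simp

lemma part2 : ∀ ε : ℝ, 0 < ε → ε < 1 / 3 → ∀ u v : M3, u ≠ v →
    ∃ x ∈ ({M3.a 0, M3.a 1, M3.a 2} : Set M3), ∃ y ∈ ({M3.a 0, M3.a 1, M3.a 2} : Set M3),
      x ≠ y ∧ (1 - ε) * (dist u v + dist x y) > dist x u + dist y v := by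
  intro ε hε hε3 u v huv
  obtain ⟨i, j, hij, hi, hj⟩ := key u v huv
  refine ⟨M3.a i, mem_A i, M3.a j, mem_A j, fun hc => hij (M3.a.inj hc), ?_⟩
  rw [dist_a_a hij]
  have h1 := one_le_dist huv
  nlinarith [h1, hi, hj]

end M3

/-- `M₃` does not have the LTP; in fact, for every `0 < ε < 1/3` and all `u ≠ v` in `M₃`
there are distinct `x, y ∈ {a₁, a₂, a₃}` with
`(1-ε)(d(u,v) + d(x,y)) > d(x,u) + d(y,v)`. -/
theorem M3_not_LTP :
    ¬ LTP M3 ∧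
    ∀ ε : ℝ, 0 < ε → ε < 1 / 3 → ∀ u v : M3, u ≠ v →
      ∃ x ∈ ({M3.a 0, M3.a 1, M3.a 2} : Set M3), ∃ y ∈ ({M3.a 0, M3.a 1, M3.a 2} : Set M3),
        x ≠ y ∧ (1 - ε) * (dist u v + dist x y) > dist x u + dist y v := by
  exact ⟨by
    intro h
    obtain ⟨u, v, huv, hall⟩ := h (1/4) (by norm_num)
      ({M3.a 0, M3.a 1, M3.a 2} : Set M3)
      (Set.toFinite _)
    obtain ⟨x, hx, y, hy, hxy, hgt⟩ := M3.part2 (1/4) (by norm_num) (by norm_num) u v huv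
    have := hall x hx y hy
    linarith, M3.part2⟩
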